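/- arXiv:1407.7603 — 2 statements merged into one kernel-verified Lean document; each statement's English description precedes it below -/
import Mathlib

section
/- Let H be a separable real Hilbert space, let ν be a finite Borel measure on H with ν({0}) = 0, and for t > 0 let μ_t := e^{−t ν(H)} Σ_{n=0}^∞ (t^n/n!) ν^{*n} be the compound Poisson measure with jump measure ν (ν^{*n} denoting the n-fold convolution power, ν^{*0} = δ_0), and let P_t f(x) := ∫_H f(x+y) μ_t(dy) for bounded Borel measurable f : H → ℝ. Then for every t > 0, every bounded Borel measurable f : H → ℝ and every x ∈ H, ∫_H |P_t f(x+y) − P_t f(x)|² ν(dy) ≤ (1/t) · P_t(f²)(x). -/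
open MeasureTheory

/-- The `n`-fold convolution power of a measure (`ν^{*0} = δ₀`). -/
noncomputable def convPow {H : Type*} [AddMonoid H] [MeasurableSpace H]
    (ν : Measure H) : ℕ → Measure H
  | 0 => Measure.dirac 0
  | n + 1 => (convPow ν n).conv ν

/-- The compound Poisson measure `μ_t = e^{-t ν(H)} ∑ₙ (tⁿ/n!) ν^{*n}`. -/
noncomputable def compoundPoisson {H : Type*} [AddMonoid H] [MeasurableSpace H]
    (ν : Measure H) (t : ℝ) : Measure H :=
  ENNReal.ofReal (Real.exp (-t * (ν Set.univ).toReal)) •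
    Measure.sum (fun n => ENNReal.ofReal (t ^ n / n.factorial) • convPow ν n)

/-- The transition semigroup of a compound Poisson process:
`P_t f (x) = ∫_H f(x+y) μ_t(dy)`. -/
noncomputable def cpSemigroup {H : Type*} [AddMonoid H] [MeasurableSpace H]
    (ν : Measure H) (t : ℝ) (f : H → ℝ) (x : H) : ℝ :=
  ∫ y, f (x + y) ∂(compoundPoisson ν t)

/-!
Let `S ~ μ_t` have jumps `Y₁, …, Y_N` (`N` Poisson distributed), put
`g y = P_t f (x + y) - P_t f x` and `Z = ∑ g Yᵢ`. The Mecke formula gives `E Z = t ∫ g dν`,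
`Var Z = t ∫ g² dν` and `Cov (f (x + S), Z) = t ∫ g (P_t f (x + ·) - P_t f x) dν = t ∫ g² dν`, so
`0 ≤ E[(f (x + S) - (Z - E Z))²] = P_t (f²) x - t ∫ g² dν`.

To stay within convolutions of measures, `(S, Z)` is realised as a compound Poisson variable on
`H × ℝ` whose jump measure is `ν` carried to the graph of `g`. Every identity is proved for each
convolution power `ν^{*n}` and then summed against the Poisson weights.
-/

instance Prod.measurableAdd₂ {M N : Type*} [MeasurableSpace M] [MeasurableSpace N] [Add M]
    [Add N] [MeasurableAdd₂ M] [MeasurableAdd₂ N] : MeasurableAdd₂ (M × N) :=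
  ⟨(measurable_fst.fst.add measurable_snd.fst).prodMk (measurable_fst.snd.add measurable_snd.snd)⟩

section ConvPow

variable {G : Type*} [AddMonoid G] [MeasurableSpace G]

lemma convPow_zero (ρ : Measure G) : convPow ρ 0 = Measure.dirac 0 := rfl

lemma convPow_succ (ρ : Measure G) (n : ℕ) : convPow ρ (n + 1) = convPow ρ n ∗ ρ := rfl

variable [MeasurableAdd₂ G]

lemma convPow_one (ρ : Measure G) [SFinite ρ] : convPow ρ 1 = ρ := Measure.dirac_zero_conv ρ

instance isFiniteMeasure_convPow (ρ : Measure G) [IsFiniteMeasure ρ] (n : ℕ) :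
    IsFiniteMeasure (convPow ρ n) := by
  induction n with
  | zero => exact inferInstanceAs (IsFiniteMeasure (Measure.dirac 0))
  | succ n ih => rw [convPow_succ]; infer_instance

lemma measure_univ_conv (μ τ : Measure G) [SFinite μ] [SFinite τ] :
    (μ ∗ τ) Set.univ = μ Set.univ * τ Set.univ := by
  rw [Measure.conv, Measure.map_apply measurable_add MeasurableSet.univ, Set.preimage_univ,
    ← Set.univ_prod_univ, Measure.prod_prod]

lemma measure_univ_convPow (ρ : Measure G) [IsFiniteMeasure ρ] (n : ℕ) :
    convPow ρ n Set.univ = ρ Set.univ ^ n := by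
  induction n with
  | zero => simp [convPow]
  | succ n ih => rw [convPow_succ, measure_univ_conv, ih, pow_succ]

lemma map_convPow {G' : Type*} [AddMonoid G'] [MeasurableSpace G'] [MeasurableAdd₂ G']
    (ρ : Measure G) [IsFiniteMeasure ρ] (φ : G →+ G') (hφ : Measurable φ) (n : ℕ) :
    (convPow ρ n).map φ = convPow (ρ.map φ) n := by
  induction n with
  | zero => simp [convPow, Measure.map_dirac' hφ]
  | succ n ih => rw [convPow_succ, Measure.map_conv_addMonoidHom φ hφ, ih, convPow_succ]

lemma ae_conv_of_ae {μ τ : Measure G} [SFinite μ] [SFinite τ] {P Q R : G → Prop}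
    (hR : MeasurableSet {z | R z}) (hP : ∀ᵐ a ∂μ, P a) (hQ : ∀ᵐ b ∂τ, Q b)
    (h : ∀ a b, P a → Q b → R (a + b)) : ∀ᵐ z ∂(μ ∗ τ), R z := by
  rw [Measure.conv, ae_map_iff measurable_add.aemeasurable hR]
  filter_upwards [Measure.quasiMeasurePreserving_fst.ae hP,
    Measure.quasiMeasurePreserving_snd.ae hQ] with p hp hq using h _ _ hp hq

lemma ae_abs_le_convPow (ρ : Measure G) [IsFiniteMeasure ρ] {L : G →+ ℝ} (hL : Measurable L)
    {B : ℝ} (hB : ∀ᵐ q ∂ρ, |L q| ≤ B) (n : ℕ) : ∀ᵐ p ∂(convPow ρ n), |L p| ≤ n * B := by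
  induction n with
  | zero =>
    rw [convPow_zero]
    exact (ae_dirac_iff (measurableSet_le hL.abs measurable_const)).mpr (by simp)
  | succ n ih =>
    refine ae_conv_of_ae (measurableSet_le hL.abs measurable_const) ih hB fun a b ha hb => ?_
    rw [map_add, Nat.cast_succ, add_one_mul]
    exact (abs_add_le _ _).trans (add_le_add ha hb)

end ConvPow

lemma Measurable.integral_prod_right {α β : Type*} [MeasurableSpace α] [MeasurableSpace β]
    {ν : Measure β} [SFinite ν] {f : α → β → ℝ} (hf : Measurable (Function.uncurry f)) :
    Measurable fun x => ∫ y, f x y ∂ν :=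
  hf.stronglyMeasurable.integral_prod_right.measurable

def BoundedAlong {X : Type*} (L Φ : X → ℝ) : Prop :=
  ∀ R, ∃ D, ∀ p, |L p| ≤ R → |Φ p| ≤ D

namespace BoundedAlong

variable {X : Type*} {L Φ Ψ : X → ℝ}

lemma self : BoundedAlong L L := fun R => ⟨R, fun _ h => h⟩

lemma of_abs_le {C : ℝ} (h : ∀ p, |Φ p| ≤ C) : BoundedAlong L Φ := fun _ => ⟨C, fun p _ => h p⟩

lemma mul (hΦ : BoundedAlong L Φ) (hΨ : BoundedAlong L Ψ) :
    BoundedAlong L fun p => Φ p * Ψ p := fun R => by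
  obtain ⟨D, hD⟩ := hΦ R
  obtain ⟨E, hE⟩ := hΨ R
  refine ⟨D * E, fun p hp => ?_⟩
  rw [abs_mul]
  exact mul_le_mul (hD p hp) (hE p hp) (abs_nonneg _) ((abs_nonneg _).trans (hD p hp))

lemma integrable [MeasurableSpace X] {μ : Measure X} [IsFiniteMeasure μ] (hΦ : BoundedAlong L Φ)
    (hΦm : Measurable Φ) {R : ℝ} (hR : ∀ᵐ p ∂μ, |L p| ≤ R) : Integrable Φ μ := by
  obtain ⟨D, hD⟩ := hΦ R
  exact Integrable.of_bound hΦm.aestronglyMeasurable D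
    (by filter_upwards [hR] with p hp using hD p hp)

end BoundedAlong

section Mecke

variable {G : Type*} [AddCommMonoid G] {L : G →+ ℝ} {Φ : G → ℝ}

lemma BoundedAlong.comp_add_left (hΦ : BoundedAlong L Φ) (a : G) :
    BoundedAlong L fun q => Φ (a + q) := fun R => by
  obtain ⟨D, hD⟩ := hΦ (|L a| + R)
  exact ⟨D, fun q hq => hD _ (by rw [map_add]; exact (abs_add_le _ _).trans (by linarith))⟩

variable [MeasurableSpace G] {ρ : Measure G} [IsFiniteMeasure ρ] {B : ℝ}

lemma boundedAlong_integral (hB : ∀ᵐ q ∂ρ, |L q| ≤ B) {Θ : G → G → ℝ}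
    (hΘ : ∀ R, ∃ D, ∀ p q, |L p| ≤ R → |L q| ≤ B → |Θ p q| ≤ D) :
    BoundedAlong L fun p => ∫ q, Θ p q ∂ρ := fun R => by
  obtain ⟨D, hD⟩ := hΘ R
  refine ⟨D * ρ.real Set.univ, fun p hp => ?_⟩
  rw [← Real.norm_eq_abs]
  exact norm_integral_le_of_norm_le_const (by filter_upwards [hB] with q hq using hD p q hp hq)

lemma BoundedAlong.integral_comp_add (hB : ∀ᵐ q ∂ρ, |L q| ≤ B) (hΦ : BoundedAlong L Φ) :
    BoundedAlong L fun p => ∫ q, Φ (p + q) ∂ρ :=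
  boundedAlong_integral hB fun R => by
    obtain ⟨D, hD⟩ := hΦ (R + B)
    exact ⟨D, fun p q hp hq => hD _ (by rw [map_add]; exact (abs_add_le _ _).trans (by linarith))⟩

lemma BoundedAlong.integral_comp_add_mul (hB : ∀ᵐ q ∂ρ, |L q| ≤ B) (hΦ : BoundedAlong L Φ) :
    BoundedAlong L fun p => ∫ q, Φ (p + q) * L q ∂ρ :=
  boundedAlong_integral hB fun R => by
    obtain ⟨D, hD⟩ := hΦ (R + B)
    refine ⟨D * B, fun p q hp hq => ?_⟩
    have hpq : |Φ (p + q)| ≤ D :=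
      hD _ (by rw [map_add]; exact (abs_add_le _ _).trans (by linarith))
    rw [abs_mul]
    exact mul_le_mul hpq hq (abs_nonneg _) ((abs_nonneg _).trans hpq)

variable [MeasurableAdd₂ G]

lemma integrable_comp_add_add_mul (hL : Measurable L) (hB : ∀ᵐ q ∂ρ, |L q| ≤ B) (hΦm : Measurable Φ)
    (hΦ : BoundedAlong L Φ) (p : G) :
    Integrable (fun x : G × G => Φ (p + x.1 + x.2) * L x.1) (ρ.prod ρ) := by
  obtain ⟨D, hD⟩ := hΦ (|L p| + B + B)
  have hm : Measurable fun x : G × G => Φ (p + x.1 + x.2) * L x.1 :=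
    (hΦm.comp ((measurable_const_add p).comp measurable_fst |>.add measurable_snd)).mul
      (hL.comp measurable_fst)
  refine Integrable.of_bound hm.aestronglyMeasurable (D * B) ?_
  filter_upwards [Measure.quasiMeasurePreserving_fst.ae hB,
    Measure.quasiMeasurePreserving_snd.ae hB] with x h₁ h₂
  have hΦx : |Φ (p + x.1 + x.2)| ≤ D := hD _ (by
    simp only [map_add]
    exact (abs_add_le _ _).trans (add_le_add ((abs_add_le _ _).trans (by linarith)) h₂))
  rw [Real.norm_eq_abs, abs_mul]
  exact mul_le_mul hΦx h₁ (abs_nonneg _) ((abs_nonneg _).trans hΦx)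

lemma integral_mul_conv (hL : Measurable L) (hB : ∀ᵐ q ∂ρ, |L q| ≤ B) {μ : Measure G}
    [IsFiniteMeasure μ] {R : ℝ} (hR : ∀ᵐ p ∂μ, |L p| ≤ R) (hΦm : Measurable Φ)
    (hΦ : BoundedAlong L Φ) :
    ∫ p, Φ p * L p ∂(μ ∗ ρ) =
      ∫ p, (∫ q, Φ (p + q) ∂ρ) * L p ∂μ + ∫ p, ∫ q, Φ (p + q) * L q ∂ρ ∂μ := by
  have hRB : ∀ᵐ p ∂(μ ∗ ρ), |L p| ≤ R + B :=
    ae_conv_of_ae (measurableSet_le hL.abs measurable_const) hR hB fun a b ha hb => by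
      rw [map_add]
      exact (abs_add_le _ _).trans (add_le_add ha hb)
  have hΨm : Measurable fun p => ∫ q, Φ (p + q) ∂ρ :=
    Measurable.integral_prod_right (hΦm.comp measurable_add)
  have hΞm : Measurable fun p => ∫ q, Φ (p + q) * L q ∂ρ :=
    Measurable.integral_prod_right ((hΦm.comp measurable_add).mul (hL.comp measurable_snd))
  rw [integral_conv ((hΦ.mul .self).integrable (hΦm.mul hL) hRB),
    ← integral_add (((hΦ.integral_comp_add hB).mul .self).integrable (hΨm.mul hL) hR)
      ((hΦ.integral_comp_add_mul hB).integrable hΞm hR)]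
  refine integral_congr_ae (ae_of_all _ fun p => ?_)
  have hΦp := hΦ.comp_add_left p
  have hΦpm : Measurable fun q => Φ (p + q) := hΦm.comp (measurable_const_add p)
  simp only [map_add, mul_add]
  rw [integral_add ((hΦp.integrable hΦpm hB).mul_const _)
    ((hΦp.mul .self).integrable (hΦpm.mul hL) hB), integral_mul_const]

/-- Mecke formula: at `p = q₁ + ⋯ + q_{n+1}` the factor `L p` splits as `∑ L qᵢ`, and the
`n + 1` jumps `qᵢ` play symmetric roles. -/
theorem integral_mul_convPow_succ (hL : Measurable L) (hB : ∀ᵐ q ∂ρ, |L q| ≤ B)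
    (hΦm : Measurable Φ) (hΦ : BoundedAlong L Φ) (n : ℕ) :
    ∫ p, Φ p * L p ∂(convPow ρ (n + 1)) =
      (n + 1) * ∫ p, ∫ q, Φ (p + q) * L q ∂ρ ∂(convPow ρ n) := by
  have hΞm : ∀ {Φ : G → ℝ}, Measurable Φ → Measurable fun p => ∫ q, Φ (p + q) * L q ∂ρ :=
    fun hΦm =>
      Measurable.integral_prod_right ((hΦm.comp measurable_add).mul (hL.comp measurable_snd))
  induction n generalizing Φ with
  | zero =>
    rw [convPow_one, convPow_zero, integral_dirac' _ _ (hΞm hΦm).stronglyMeasurable]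
    simp
  | succ n ih =>
    set Ψ := fun p => ∫ q, Φ (p + q) ∂ρ
    set Ξ := fun p => ∫ q, Φ (p + q) * L q ∂ρ
    have hLn : ∀ m : ℕ, ∀ᵐ p ∂(convPow ρ m), |L p| ≤ m * B := ae_abs_le_convPow ρ hL hB
    have hΞ : Integrable Ξ (convPow ρ (n + 1)) :=
      (hΦ.integral_comp_add_mul hB).integrable (hΞm hΦm) (hLn _)
    have hshift : ∫ p, Ψ p * L p ∂(convPow ρ (n + 1)) =
        (n + 1) * ∫ p, Ξ p ∂(convPow ρ (n + 1)) := by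
      have hΨm : Measurable Ψ := Measurable.integral_prod_right (hΦm.comp measurable_add)
      rw [ih hΨm (hΦ.integral_comp_add hB), convPow_succ ρ n, integral_conv hΞ]
      congr 1
      refine integral_congr_ae (ae_of_all _ fun p => ?_)
      simp only [Ψ, Ξ, ← integral_mul_const]
      rw [integral_integral_swap (integrable_comp_add_add_mul hL hB hΦm hΦ p)]
      simp only [add_right_comm]
    rw [convPow_succ ρ (n + 1), integral_mul_conv hL hB (hLn _) hΦm hΦ, hshift]
    push_cast
    ring

end Mecke

section CompoundPoisson

/-- The weight of `convPow ν n` in `compoundPoisson ν t` when `a = ν univ`; the Poisson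
probabilities with mean `t * a` are `cpWeight t a n * a ^ n`. -/
noncomputable def cpWeight (t a : ℝ) (n : ℕ) : ℝ :=
  Real.exp (-t * a) * (t ^ n / n.factorial)

variable {t a : ℝ}

lemma cpWeight_nonneg (ht : 0 ≤ t) (n : ℕ) : 0 ≤ cpWeight t a n := by
  unfold cpWeight; positivity

lemma hasSum_cpWeight_mul_pow : HasSum (fun n => cpWeight t a n * a ^ n) 1 := by
  have h := (NormedSpace.expSeries_div_hasSum_exp (t * a)).mul_left (Real.exp (-t * a))
  rw [← Real.exp_eq_exp_ℝ, ← Real.exp_add, neg_mul, neg_add_cancel, Real.exp_zero] at h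
  have e : (fun n => cpWeight t a n * a ^ n) =
      fun n => Real.exp (-(t * a)) * ((t * a) ^ n / n.factorial) := by
    funext n
    rw [cpWeight, mul_pow, neg_mul]
    ring
  rw [e]
  exact h

lemma cpWeight_succ_mul (n : ℕ) : cpWeight t a (n + 1) * (n + 1) = t * cpWeight t a n := by
  simp only [cpWeight, Nat.factorial_succ, Nat.cast_mul, pow_succ]
  field_simp
  push_cast
  ring

lemma HasSum.cpWeight_shift {X Y : ℕ → ℝ} {S : ℝ}
    (hY : HasSum (fun n => cpWeight t a n * Y n) S) (hX₀ : X 0 = 0)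
    (hX : ∀ n : ℕ, X (n + 1) = (n + 1) * Y n) :
    HasSum (fun n => cpWeight t a n * X n) (t * S) := by
  rw [← hasSum_nat_add_iff' 1]
  simpa [hX₀, hX, ← mul_assoc, cpWeight_succ_mul] using hY.mul_left t

variable {G : Type*} [AddMonoid G] [MeasurableSpace G] (ν : Measure G)

lemma compoundPoisson_eq_sum :
    compoundPoisson ν t =
      Measure.sum fun n => ENNReal.ofReal (cpWeight t (ν Set.univ).toReal n) • convPow ν n := by
  ext s hs
  rw [compoundPoisson, Measure.smul_apply, Measure.sum_apply _ hs, Measure.sum_apply _ hs,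
    smul_eq_mul, ← ENNReal.tsum_mul_left]
  congr 1 with n
  simp only [Measure.smul_apply, smul_eq_mul, cpWeight,
    ENNReal.ofReal_mul (Real.exp_nonneg _), mul_assoc]

lemma hasSum_integral_compoundPoisson (ht : 0 ≤ t) {φ : G → ℝ}
    (hφ : Integrable φ (compoundPoisson ν t)) :
    HasSum (fun n => cpWeight t (ν Set.univ).toReal n * ∫ z, φ z ∂(convPow ν n))
      (∫ z, φ z ∂(compoundPoisson ν t)) := by
  rw [compoundPoisson_eq_sum ν] at hφ ⊢
  simpa only [integral_smul_measure, ENNReal.toReal_ofReal (cpWeight_nonneg ht _),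
    smul_eq_mul] using hasSum_integral_measure hφ

variable [MeasurableAdd₂ G] [IsFiniteMeasure ν]

lemma isProbabilityMeasure_compoundPoisson (ht : 0 ≤ t) :
    IsProbabilityMeasure (compoundPoisson ν t) := by
  constructor
  rw [compoundPoisson_eq_sum ν, Measure.sum_apply _ MeasurableSet.univ]
  set a := (ν Set.univ).toReal
  have hterm : ∀ n, (ENNReal.ofReal (cpWeight t a n) • convPow ν n) Set.univ =
      ENNReal.ofReal (cpWeight t a n * a ^ n) := fun n => by
    rw [Measure.smul_apply, measure_univ_convPow, smul_eq_mul,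
      ENNReal.ofReal_mul (cpWeight_nonneg ht n), ENNReal.ofReal_pow ENNReal.toReal_nonneg,
      ENNReal.ofReal_toReal (measure_ne_top ν _)]
  simp_rw [hterm]
  rw [← ENNReal.ofReal_tsum_of_nonneg
      (fun n => mul_nonneg (cpWeight_nonneg ht n) (by positivity))
      hasSum_cpWeight_mul_pow.summable,
    hasSum_cpWeight_mul_pow.tsum_eq, ENNReal.ofReal_one]

end CompoundPoisson

lemma integrable_sq_of_abs_le {X : Type*} [MeasurableSpace X] {μ : Measure X}
    [IsFiniteMeasure μ] {φ : X → ℝ} (hφ : Measurable φ) {C : ℝ} (hC : ∀ x, |φ x| ≤ C) :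
    Integrable (fun x => φ x ^ 2) μ :=
  Integrable.of_bound (hφ.pow_const 2).aestronglyMeasurable (C ^ 2) (ae_of_all _ fun x => by
    rw [norm_pow]
    exact pow_le_pow_left₀ (norm_nonneg _) ((Real.norm_eq_abs _).trans_le (hC x)) 2)

lemma integral_sub_add_sq {X : Type*} [MeasurableSpace X] {μ : Measure X} [IsFiniteMeasure μ]
    {u v : X → ℝ} (hu : Integrable u μ) (hv : Integrable v μ)
    (hu2 : Integrable (fun x => u x ^ 2) μ) (hv2 : Integrable (fun x => v x ^ 2) μ)
    (huv : Integrable (fun x => u x * v x) μ) (K : ℝ) :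
    ∫ x, (u x - v x + K) ^ 2 ∂μ = ∫ x, u x ^ 2 ∂μ - 2 * ∫ x, u x * v x ∂μ + 2 * K * ∫ x, u x ∂μ
      + ∫ x, v x ^ 2 ∂μ - 2 * K * ∫ x, v x ∂μ + K ^ 2 * μ.real Set.univ := by
  have h : ∀ x, (u x - v x + K) ^ 2 = u x ^ 2 - 2 * (u x * v x) + 2 * K * u x + v x ^ 2
      - 2 * K * v x + K ^ 2 := fun x => by ring
  simp_rw [h]
  rw [integral_add, integral_sub, integral_add, integral_add, integral_sub]
  all_goals try fun_prop
  simp only [integral_const_mul, integral_const, smul_eq_mul]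
  ring

section GraphMeasure

variable {α : Type*} [MeasurableSpace α] (ν : Measure α) {g : α → ℝ}

/-- `ν` carried to the graph of `g`; in `convPow (graphMeasure ν g) n` the second coordinate
is the sum of `g` over the `n` jumps. -/
noncomputable def graphMeasure (g : α → ℝ) : Measure (α × ℝ) :=
  ν.map fun y => (y, g y)

instance isFiniteMeasure_graphMeasure [IsFiniteMeasure ν] : IsFiniteMeasure (graphMeasure ν g) := by
  unfold graphMeasure; infer_instance

lemma integral_graphMeasure (hg : Measurable g) {Θ : α × ℝ → ℝ} (hΘ : Measurable Θ) :
    ∫ q, Θ q ∂(graphMeasure ν g) = ∫ y, Θ (y, g y) ∂ν :=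
  integral_map (measurable_id.prodMk hg).aemeasurable hΘ.aestronglyMeasurable

lemma map_fst_graphMeasure (hg : Measurable g) : (graphMeasure ν g).map Prod.fst = ν := by
  have hm : Measurable fun y => (y, g y) := measurable_id.prodMk hg
  rw [graphMeasure, Measure.map_map measurable_fst hm]
  exact Measure.map_id

variable [AddCommMonoid α]

lemma ae_abs_snd_graphMeasure (hg : Measurable g) {B : ℝ} (hgB : ∀ y, |g y| ≤ B) :
    ∀ᵐ q ∂(graphMeasure ν g), |AddMonoidHom.snd α ℝ q| ≤ B :=
  (ae_map_iff (measurable_id.prodMk hg).aemeasurable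
    (measurableSet_le measurable_snd.abs measurable_const)).mpr (ae_of_all _ hgB)

variable [MeasurableAdd₂ α] [IsFiniteMeasure ν]

lemma map_fst_convPow_graphMeasure (hg : Measurable g) (n : ℕ) :
    (convPow (graphMeasure ν g) n).map Prod.fst = convPow ν n := by
  simpa [map_fst_graphMeasure ν hg] using
    map_convPow (graphMeasure ν g) (AddMonoidHom.fst α ℝ) measurable_fst n

lemma integral_comp_fst_convPow_graphMeasure (hg : Measurable g) {φ : α → ℝ} (hφ : Measurable φ)
    (n : ℕ) : ∫ p, φ p.1 ∂(convPow (graphMeasure ν g) n) = ∫ z, φ z ∂(convPow ν n) := by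
  rw [← map_fst_convPow_graphMeasure ν hg n,
    integral_map measurable_fst.aemeasurable hφ.aestronglyMeasurable]

lemma measureReal_univ_convPow_graphMeasure (hg : Measurable g) (n : ℕ) :
    (convPow (graphMeasure ν g) n).real Set.univ = (ν Set.univ).toReal ^ n := by
  rw [← ENNReal.toReal_pow, ← measure_univ_convPow, ← measureReal_def]
  simpa using integral_comp_fst_convPow_graphMeasure ν hg measurable_const (φ := fun _ => 1) n

end GraphMeasure

section GraphMoments

variable {α : Type*} [AddCommMonoid α] [MeasurableSpace α] [MeasurableAdd₂ α]
  (ν : Measure α) [IsFiniteMeasure ν] {g : α → ℝ} (hg : Measurable g) {B : ℝ}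
  (hgB : ∀ y, |g y| ≤ B)
include hg hgB

lemma ae_abs_snd_convPow_graphMeasure (n : ℕ) :
    ∀ᵐ p ∂(convPow (graphMeasure ν g) n), |p.2| ≤ n * B :=
  ae_abs_le_convPow _ measurable_snd (ae_abs_snd_graphMeasure ν hg hgB) n

lemma integral_snd_convPow_graphMeasure_succ (n : ℕ) :
    ∫ p, p.2 ∂(convPow (graphMeasure ν g) (n + 1)) =
      (n + 1) * ((ν Set.univ).toReal ^ n * ∫ y, g y ∂ν) := by
  have h := integral_mul_convPow_succ (L := AddMonoidHom.snd α ℝ) measurable_snd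
    (ae_abs_snd_graphMeasure ν hg hgB) measurable_const
    (BoundedAlong.of_abs_le (C := 1) (Φ := fun _ => 1) (by simp)) n
  simp only [AddMonoidHom.coe_snd, one_mul] at h
  rw [h, integral_graphMeasure ν hg measurable_snd, integral_const, smul_eq_mul,
    measureReal_univ_convPow_graphMeasure ν hg]

lemma integral_snd_sq_convPow_graphMeasure_succ (n : ℕ) :
    ∫ p, p.2 ^ 2 ∂(convPow (graphMeasure ν g) (n + 1)) =
      (n + 1) * ((∫ p, p.2 ∂(convPow (graphMeasure ν g) n)) * ∫ y, g y ∂ν +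
        (ν Set.univ).toReal ^ n * ∫ y, g y ^ 2 ∂ν) := by
  have h := integral_mul_convPow_succ (L := AddMonoidHom.snd α ℝ) measurable_snd
    (ae_abs_snd_graphMeasure ν hg hgB) measurable_snd BoundedAlong.self n
  simp only [AddMonoidHom.coe_snd, ← sq] at h
  have hg1 : Integrable g ν := Integrable.of_bound hg.aestronglyMeasurable B (ae_of_all _ hgB)
  have hg2 : Integrable (fun y => g y ^ 2) ν := integrable_sq_of_abs_le hg hgB
  have hinner : ∀ p : α × ℝ, ∫ q, (p + q).2 * q.2 ∂(graphMeasure ν g) =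
      p.2 * ∫ y, g y ∂ν + ∫ y, g y ^ 2 ∂ν := fun p => by
    rw [integral_graphMeasure ν hg (by fun_prop)]
    simp only [Prod.snd_add, add_mul, ← sq]
    rw [integral_add (hg1.const_mul _) hg2, integral_const_mul]
  rw [h]
  simp only [hinner]
  rw [integral_add ((BoundedAlong.self.integrable measurable_snd
      (ae_abs_snd_convPow_graphMeasure ν hg hgB n)).mul_const _) (integrable_const _),
    integral_mul_const, integral_const, smul_eq_mul, measureReal_univ_convPow_graphMeasure ν hg]

lemma integral_mul_snd_convPow_graphMeasure_succ {F : α → ℝ} (hF : Measurable F) {C : ℝ}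
    (hFC : ∀ z, |F z| ≤ C) (n : ℕ) :
    ∫ p, F p.1 * p.2 ∂(convPow (graphMeasure ν g) (n + 1)) =
      (n + 1) * ∫ z, ∫ y, F (z + y) * g y ∂ν ∂(convPow ν n) := by
  have h := integral_mul_convPow_succ (L := AddMonoidHom.snd α ℝ) measurable_snd
    (ae_abs_snd_graphMeasure ν hg hgB) (Φ := fun p => F p.1) (hF.comp measurable_fst)
    (BoundedAlong.of_abs_le fun p => hFC p.1) n
  simp only [AddMonoidHom.coe_snd] at h
  have hinner : ∀ p : α × ℝ, ∫ q, F (p + q).1 * q.2 ∂(graphMeasure ν g) =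
      ∫ y, F (p.1 + y) * g y ∂ν := fun p =>
    integral_graphMeasure ν hg (by fun_prop)
  rw [h]
  simp only [hinner]
  exact congrArg _ (integral_comp_fst_convPow_graphMeasure ν hg
    (φ := fun z => ∫ y, F (z + y) * g y ∂ν) (Measurable.integral_prod_right (by fun_prop)) n)

variable {t : ℝ}

lemma hasSum_integral_snd_convPow_graphMeasure :
    HasSum (fun n => cpWeight t (ν Set.univ).toReal n *
      ∫ p, p.2 ∂(convPow (graphMeasure ν g) n)) (t * ∫ y, g y ∂ν) := by
  have hY : HasSum (fun n => cpWeight t (ν Set.univ).toReal n *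
      ((ν Set.univ).toReal ^ n * ∫ y, g y ∂ν)) (∫ y, g y ∂ν) := by
    simpa [mul_assoc] using hasSum_cpWeight_mul_pow.mul_right (∫ y, g y ∂ν)
  refine hY.cpWeight_shift ?_ (integral_snd_convPow_graphMeasure_succ ν hg hgB)
  rw [convPow_zero, integral_dirac' _ _ measurable_snd.stronglyMeasurable]
  rfl

lemma hasSum_integral_snd_sq_convPow_graphMeasure :
    HasSum (fun n => cpWeight t (ν Set.univ).toReal n *
      ∫ p, p.2 ^ 2 ∂(convPow (graphMeasure ν g) n))
      (t * (t * (∫ y, g y ∂ν) ^ 2 + ∫ y, g y ^ 2 ∂ν)) := by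
  have hY := ((hasSum_integral_snd_convPow_graphMeasure (t := t) ν hg hgB).mul_right
    (∫ y, g y ∂ν)).add ((hasSum_cpWeight_mul_pow (t := t) (a := (ν Set.univ).toReal)).mul_right
    (∫ y, g y ^ 2 ∂ν))
  rw [one_mul, mul_assoc, ← sq] at hY
  refine HasSum.cpWeight_shift (by simpa only [mul_add, mul_assoc] using hY) ?_
    (integral_snd_sq_convPow_graphMeasure_succ ν hg hgB)
  rw [convPow_zero, integral_dirac' _ _ (measurable_snd.pow_const 2).stronglyMeasurable]
  simp

lemma hasSum_integral_mul_snd_convPow_graphMeasure (ht : 0 ≤ t) {F : α → ℝ} (hF : Measurable F)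
    {C : ℝ} (hFC : ∀ z, |F z| ≤ C) :
    HasSum (fun n => cpWeight t (ν Set.univ).toReal n *
      ∫ p, F p.1 * p.2 ∂(convPow (graphMeasure ν g) n))
      (t * ∫ z, ∫ y, F (z + y) * g y ∂ν ∂(compoundPoisson ν t)) := by
  have := isProbabilityMeasure_compoundPoisson ν ht
  have hbound : ∀ z, ‖∫ y, F (z + y) * g y ∂ν‖ ≤ C * B * ν.real Set.univ := fun z =>
    norm_integral_le_of_norm_le_const (ae_of_all _ fun y => norm_mul_le_of_le
      ((Real.norm_eq_abs _).trans_le (hFC _)) ((Real.norm_eq_abs _).trans_le (hgB y)))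
  have hm : Measurable fun z => ∫ y, F (z + y) * g y ∂ν :=
    Measurable.integral_prod_right (by fun_prop)
  have hY := hasSum_integral_compoundPoisson ν ht
    (Integrable.of_bound hm.aestronglyMeasurable _ (ae_of_all _ hbound))
  refine hY.cpWeight_shift ?_ (integral_mul_snd_convPow_graphMeasure_succ ν hg hgB hF hFC)
  rw [convPow_zero, integral_dirac' _ _ (by fun_prop)]
  simp

lemma integral_sub_snd_add_sq_convPow_graphMeasure {F : α → ℝ} (hF : Measurable F) {C : ℝ}
    (hFC : ∀ z, |F z| ≤ C) (K : ℝ) (n : ℕ) :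
    ∫ p, (F p.1 - p.2 + K) ^ 2 ∂(convPow (graphMeasure ν g) n) =
      ∫ z, F z ^ 2 ∂(convPow ν n) - 2 * ∫ p, F p.1 * p.2 ∂(convPow (graphMeasure ν g) n) +
        2 * K * ∫ z, F z ∂(convPow ν n) + ∫ p, p.2 ^ 2 ∂(convPow (graphMeasure ν g) n) -
        2 * K * ∫ p, p.2 ∂(convPow (graphMeasure ν g) n) + K ^ 2 * (ν Set.univ).toReal ^ n := by
  have hI : ∀ {Φ : α × ℝ → ℝ}, Measurable Φ → BoundedAlong Prod.snd Φ →
      Integrable Φ (convPow (graphMeasure ν g) n) := fun hm hb =>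
    hb.integrable hm (ae_abs_snd_convPow_graphMeasure ν hg hgB n)
  have hFb : BoundedAlong Prod.snd fun p : α × ℝ => F p.1 :=
    BoundedAlong.of_abs_le fun p => hFC p.1
  rw [integral_sub_add_sq (hI (by fun_prop) hFb) (hI measurable_snd .self)
    (by simpa only [sq] using hI (by fun_prop) (hFb.mul hFb))
    (by simpa only [sq] using hI (by fun_prop) (BoundedAlong.self.mul .self))
    (hI (by fun_prop) (hFb.mul .self)),
    integral_comp_fst_convPow_graphMeasure ν hg (hF.pow_const 2),
    integral_comp_fst_convPow_graphMeasure ν hg hF, measureReal_univ_convPow_graphMeasure ν hg]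

/-- The shift `t ∫ g dν` is `E Z`, which makes the terms quadratic in `∫ g dν` cancel. -/
lemma hasSum_integral_sub_snd_add_sq_convPow_graphMeasure (ht : 0 ≤ t) {F : α → ℝ}
    (hF : Measurable F) {C : ℝ} (hFC : ∀ z, |F z| ≤ C) :
    HasSum (fun n => cpWeight t (ν Set.univ).toReal n *
      ∫ p, (F p.1 - p.2 + t * ∫ y, g y ∂ν) ^ 2 ∂(convPow (graphMeasure ν g) n))
      (∫ z, F z ^ 2 ∂(compoundPoisson ν t) -
        2 * t * ∫ z, ∫ y, F (z + y) * g y ∂ν ∂(compoundPoisson ν t) +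
        2 * t * (∫ y, g y ∂ν) * (∫ z, F z ∂(compoundPoisson ν t)) + t * ∫ y, g y ^ 2 ∂ν) := by
  have := isProbabilityMeasure_compoundPoisson ν ht
  have hFi : Integrable F (compoundPoisson ν t) :=
    Integrable.of_bound hF.aestronglyMeasurable C (ae_of_all _ hFC)
  have hsum := (((((hasSum_integral_compoundPoisson ν ht (integrable_sq_of_abs_le hF hFC)).sub
    ((hasSum_integral_mul_snd_convPow_graphMeasure ν hg hgB ht hF hFC).mul_left 2)).add
    ((hasSum_integral_compoundPoisson ν ht hFi).mul_left (2 * (t * ∫ y, g y ∂ν)))).add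
    (hasSum_integral_snd_sq_convPow_graphMeasure (t := t) ν hg hgB)).sub
    ((hasSum_integral_snd_convPow_graphMeasure (t := t) ν hg hgB).mul_left
      (2 * (t * ∫ y, g y ∂ν)))).add
    ((hasSum_cpWeight_mul_pow (t := t) (a := (ν Set.univ).toReal)).mul_left
      ((t * ∫ y, g y ∂ν) ^ 2))
  simp_rw [integral_sub_snd_add_sq_convPow_graphMeasure ν hg hgB hF hFC]
  convert hsum using 1
  · rfl
  · funext n
    ring
  · ring

end GraphMoments

lemma integral_integral_comp_add_mul_swap {α : Type*} [AddCommMonoid α] [MeasurableSpace α]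
    [MeasurableAdd₂ α] {μ ν : Measure α} [IsFiniteMeasure μ] [IsFiniteMeasure ν] {F g : α → ℝ}
    (hF : Measurable F) {C : ℝ} (hFC : ∀ z, |F z| ≤ C) (hg : Measurable g) {B : ℝ}
    (hgB : ∀ y, |g y| ≤ B) :
    ∫ z, ∫ y, F (z + y) * g y ∂ν ∂μ = ∫ y, g y * ∫ z, F (y + z) ∂μ ∂ν := by
  have hint : Integrable (Function.uncurry fun z y => F (z + y) * g y) (μ.prod ν) :=
    Integrable.of_bound (by fun_prop) (C * B) (ae_of_all _ fun x => norm_mul_le_of_le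
      ((Real.norm_eq_abs _).trans_le (hFC _)) ((Real.norm_eq_abs _).trans_le (hgB _)))
  rw [integral_integral_swap hint]
  refine integral_congr_ae (ae_of_all _ fun y => ?_)
  dsimp only
  rw [integral_mul_const, mul_comm]
  simp only [add_comm]

section Variance

variable {α : Type*} [AddCommMonoid α] [MeasurableSpace α] [MeasurableAdd₂ α]
  (ν : Measure α) [IsFiniteMeasure ν] {t : ℝ} (ht : 0 ≤ t) {F : α → ℝ} (hF : Measurable F)
  {C : ℝ} (hFC : ∀ z, |F z| ≤ C)
include ht

lemma abs_integral_compoundPoisson_le {φ : α → ℝ} (hφ : ∀ z, |φ z| ≤ C) :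
    |∫ z, φ z ∂(compoundPoisson ν t)| ≤ C := by
  have := isProbabilityMeasure_compoundPoisson ν ht
  simpa using norm_integral_le_of_norm_le_const (μ := compoundPoisson ν t)
    (ae_of_all _ fun z => (Real.norm_eq_abs (φ z)).trans_le (hφ z))

include hF hFC in
/-- `E[(F - (Z - E Z))²] ≥ 0`, where `Z` is the sum of `g` over the jumps. -/
theorem le_integral_sq_compoundPoisson {g : α → ℝ} (hg : Measurable g) {B : ℝ}
    (hgB : ∀ y, |g y| ≤ B) :
    t * (2 * ∫ y, g y * (∫ z, F (y + z) ∂(compoundPoisson ν t) -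
        ∫ z, F z ∂(compoundPoisson ν t)) ∂ν - ∫ y, g y ^ 2 ∂ν) ≤
      ∫ z, F z ^ 2 ∂(compoundPoisson ν t) := by
  have := isProbabilityMeasure_compoundPoisson ν ht
  have hP : ∀ y, |∫ z, F (y + z) ∂(compoundPoisson ν t)| ≤ C := fun y =>
    abs_integral_compoundPoisson_le ν ht fun z => hFC (y + z)
  have hgP : Integrable (fun y => g y * ∫ z, F (y + z) ∂(compoundPoisson ν t)) ν :=
    Integrable.of_bound (hg.mul (Measurable.integral_prod_right (by fun_prop))).aestronglyMeasurable
      (B * C) (ae_of_all _ fun y => norm_mul_le_of_le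
        ((Real.norm_eq_abs _).trans_le (hgB y)) ((Real.norm_eq_abs _).trans_le (hP y)))
  have hgi : Integrable g ν := Integrable.of_bound hg.aestronglyMeasurable B (ae_of_all _ hgB)
  have hnonneg := (hasSum_integral_sub_snd_add_sq_convPow_graphMeasure ν hg hgB ht hF hFC).nonneg
    fun n => mul_nonneg (cpWeight_nonneg ht n) (integral_nonneg fun p => sq_nonneg _)
  simp_rw [mul_sub]
  rw [integral_sub hgP (hgi.mul_const _), integral_mul_const,
    ← integral_integral_comp_add_mul_swap hF hFC hg hgB]
  linarith

include hF hFC in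
theorem mul_integral_sq_sub_le_integral_sq :
    t * ∫ y, (∫ z, F (y + z) ∂(compoundPoisson ν t) - ∫ z, F z ∂(compoundPoisson ν t)) ^ 2 ∂ν ≤
      ∫ z, F z ^ 2 ∂(compoundPoisson ν t) := by
  have := isProbabilityMeasure_compoundPoisson ν ht
  have hP : ∀ y, |∫ z, F (y + z) ∂(compoundPoisson ν t)| ≤ C := fun y =>
    abs_integral_compoundPoisson_le ν ht fun z => hFC (y + z)
  have h := le_integral_sq_compoundPoisson ν ht hF hFC
    (g := fun y => ∫ z, F (y + z) ∂(compoundPoisson ν t) - ∫ z, F z ∂(compoundPoisson ν t))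
    ((Measurable.integral_prod_right (by fun_prop)).sub_const _)
    (B := C + C) fun y =>
      (abs_sub _ _).trans (add_le_add (hP y) (abs_integral_compoundPoisson_le ν ht hFC))
  simp only [← sq] at h
  linarith

end Variance

theorem cp_square_estimate_general
    {H : Type*} [NormedAddCommGroup H]
    [SecondCountableTopology H] [MeasurableSpace H] [BorelSpace H]
    (ν : Measure H) [IsFiniteMeasure ν]
    (t : ℝ) (ht : 0 < t)
    (f : H → ℝ) (hf : Measurable f) (hfb : ∃ C, ∀ x, |f x| ≤ C)
    (x : H) :
    ∫⁻ y, ENNReal.ofReal ((cpSemigroup ν t f (x + y) - cpSemigroup ν t f x) ^ 2) ∂ν ≤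
      ENNReal.ofReal ((1 / t) * cpSemigroup ν t (fun z => f z ^ 2) x) := by
  obtain ⟨C, hC⟩ := hfb
  have := isProbabilityMeasure_compoundPoisson ν ht.le
  have hP : ∀ w, |cpSemigroup ν t f w| ≤ C := fun w =>
    abs_integral_compoundPoisson_le ν ht.le fun z => hC (w + z)
  have hPm : Measurable (cpSemigroup ν t f) := Measurable.integral_prod_right (by fun_prop)
  have hint : Integrable (fun y => (cpSemigroup ν t f (x + y) - cpSemigroup ν t f x) ^ 2) ν :=
    integrable_sq_of_abs_le ((hPm.comp (measurable_const_add x)).sub_const _)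
      fun y => (abs_sub _ _).trans (add_le_add (hP _) (hP x))
  have key := mul_integral_sq_sub_le_integral_sq ν ht.le (hf.comp (measurable_const_add x))
    fun z => hC (x + z)
  simp only [Function.comp_apply, ← add_assoc] at key
  rw [← ofReal_integral_eq_lintegral_ofReal hint (ae_of_all _ fun y => sq_nonneg _)]
  refine ENNReal.ofReal_le_ofReal ?_
  rw [one_div, inv_mul_eq_div, le_div_iff₀ ht, mul_comm]
  exact key

theorem cp_square_estimate
    {H : Type*} [NormedAddCommGroup H] [InnerProductSpace ℝ H] [CompleteSpace H]
    [SecondCountableTopology H] [MeasurableSpace H] [BorelSpace H]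
    (ν : Measure H) [IsFiniteMeasure ν] (hν0 : ν {0} = 0)
    (t : ℝ) (ht : 0 < t)
    (f : H → ℝ) (hf : Measurable f) (hfb : ∃ C, ∀ x, |f x| ≤ C)
    (x : H) :
    ∫⁻ y, ENNReal.ofReal ((cpSemigroup ν t f (x + y) - cpSemigroup ν t f x) ^ 2) ∂ν ≤
      ENNReal.ofReal ((1 / t) * cpSemigroup ν t (fun z => f z ^ 2) x) :=
  cp_square_estimate_general ν t ht f hf hfb x
end

section
/- Let Ω ⊆ ℝ^d be open and let f : Ω → ℝ be bounded and Lebesgue measurable, satisfying the logarithmic Campanato condition with constants C > 0 and α > 1, i.e. ∫_{B_r(x)} |f(y) − f̄_{x,r}|² dy ≤ C r^d / |log₂ r|^{2α} for every x ∈ Ω and every 0 < r < 1/2 with B_r(x) ⊆ Ω, where f̄_{x,r} := (1/|B_r(x)|) ∫_{B_r(x)} f(y) dy. Then there is a constant C' > 0 depending only on C and d such that for every x ∈ Ω and all radii 0 < r₂ < r₁ < min(dist(x, ∂Ω), 1/2), |f̄_{x,r₁} − f̄_{x,r₂}| ≤ C' (1 + (r₁/r₂)^{d/2}) / |log₂ r₁|^α.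 -/
/-!
With `A := f̄_{x,r₁}`, the difference `f̄_{x,r₂} - A` is the average of `f - A` over `B_{r₂}(x)`.
By Jensen its square is at most `|B_{r₂}|⁻¹ ∫_{B_{r₂}} (f - A)² ≤ |B_{r₂}|⁻¹ ∫_{B_{r₁}} (f - A)²`,
and the Campanato condition at radius `r₁` together with `|B_r| = ω_d r^d` turns this into
`(C / ω_d) (r₁ / r₂)^d / |log₂ r₁|^{2α}`.
-/

open MeasureTheory

/-- The average of `f` over the open ball `B_r(x)` (w.r.t. Lebesgue measure). -/
noncomputable def ballAvg {d : ℕ} (f : EuclideanSpace ℝ (Fin d) → ℝ)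
    (x : EuclideanSpace ℝ (Fin d)) (r : ℝ) : ℝ :=
  (volume (Metric.ball x r)).toReal⁻¹ * ∫ y in Metric.ball x r, f y

open Metric Real

theorem ball_subset_of_lt_infDist_frontier {E : Type*} [NormedAddCommGroup E] [NormedSpace ℝ E]
    {Ω : Set E} (hΩ : IsOpen Ω) {x : E} (hx : x ∈ Ω) {r : ℝ}
    (hr : r < infDist x (frontier Ω)) : ball x r ⊆ Ω := by
  rcases le_or_gt r 0 with hr0 | hr0
  · simp [ball_eq_empty.2 hr0]
  refine (convex_ball x r).isPreconnected.subset_of_closure_inter_subset hΩ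
    ⟨x, mem_ball_self hr0, hx⟩ fun y ⟨hyc, hyb⟩ => ?_
  by_contra hyΩ
  have hy : y ∈ frontier Ω := ⟨hyc, by rwa [hΩ.interior_eq]⟩
  exact (infDist_le_dist_of_mem hy).not_gt (hr.trans' (mem_ball'.1 hyb))

theorem addHaar_real_ball_of_pos {E : Type*} [NormedAddCommGroup E] [NormedSpace ℝ E]
    [MeasurableSpace E] [BorelSpace E] [FiniteDimensional ℝ E] (μ : Measure E)
    [μ.IsAddHaarMeasure] (x : E) {r : ℝ} (hr : 0 < r) :
    μ.real (ball x r) = r ^ Module.finrank ℝ E * μ.real (ball 0 1) := by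
  rw [measureReal_def, Measure.addHaar_ball_of_pos μ x hr, ENNReal.toReal_mul,
    ENNReal.toReal_ofReal (by positivity), measureReal_def]

section
variable {X : Type*} [MeasurableSpace X] {μ : Measure X} {s t : Set X} {f : X → ℝ}

theorem sq_setAverage_le_setAverage_sq (h0 : μ s ≠ 0) (hs : μ s ≠ ⊤)
    (hf : MemLp f 2 (μ.restrict s)) : (⨍ x in s, f x ∂μ) ^ 2 ≤ ⨍ x in s, f x ^ 2 ∂μ :=
  have := Fact.mk hs.lt_top
  (even_two.convexOn_pow (𝕜 := ℝ)).map_set_average_le (continuous_pow 2).continuousOn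
    isClosed_univ h0 hs (by simp) (hf.integrable one_le_two) hf.integrable_sq

theorem setAverage_sub_const (h0 : μ s ≠ 0) (hs : μ s ≠ ⊤) (hf : IntegrableOn f s μ) (c : ℝ) :
    ⨍ x in s, (f x - c) ∂μ = ⨍ x in s, f x ∂μ - c := by
  have := Fact.mk hs.lt_top
  rw [setAverage_eq, setAverage_eq, integral_sub hf (integrable_const c), setIntegral_const,
    smul_eq_mul, smul_eq_mul, smul_eq_mul, mul_sub, inv_mul_cancel_left₀]
  exact (ENNReal.toReal_pos h0 hs).ne'

theorem sq_setAverage_sub_le_of_subset (hts : t ⊆ s) (ht0 : μ t ≠ 0) (hs : μ s ≠ ⊤)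
    (hf : MemLp f 2 (μ.restrict s)) (c : ℝ) :
    (⨍ x in t, f x ∂μ - c) ^ 2 ≤ (μ.real t)⁻¹ * ∫ x in s, (f x - c) ^ 2 ∂μ := by
  have := Fact.mk hs.lt_top
  have ht : μ t ≠ ⊤ := ne_top_of_le_ne_top hs (measure_mono hts)
  have hfc : MemLp (fun x => f x - c) 2 (μ.restrict s) := hf.sub (memLp_const c)
  have hft : MemLp (fun x => f x - c) 2 (μ.restrict t) :=
    hfc.mono_measure (Measure.restrict_mono hts le_rfl)
  calc (⨍ x in t, f x ∂μ - c) ^ 2 = (⨍ x in t, (f x - c) ∂μ) ^ 2 := by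
        rw [setAverage_sub_const ht0 ht (IntegrableOn.mono_set (hf.integrable one_le_two) hts)]
    _ ≤ ⨍ x in t, (f x - c) ^ 2 ∂μ := sq_setAverage_le_setAverage_sq ht0 ht hft
    _ = (μ.real t)⁻¹ * ∫ x in t, (f x - c) ^ 2 ∂μ := by rw [setAverage_eq, smul_eq_mul]
    _ ≤ (μ.real t)⁻¹ * ∫ x in s, (f x - c) ^ 2 ∂μ := by
        refine mul_le_mul_of_nonneg_left ?_ (by positivity)
        exact setIntegral_mono_set hfc.integrable_sq (ae_of_all _ fun _ => sq_nonneg _)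
          hts.eventuallyLE

end

theorem ballAvg_eq_setAverage {d : ℕ} (f : EuclideanSpace ℝ (Fin d) → ℝ)
    (x : EuclideanSpace ℝ (Fin d)) (r : ℝ) : ballAvg f x r = ⨍ y in ball x r, f y := by
  rw [ballAvg, setAverage_eq, smul_eq_mul, measureReal_def]

theorem campanato_scaling_identity {ω r₁ r₂ L : ℝ} (hω : 0 < ω) (hr₁ : 0 < r₁) (hr₂ : 0 < r₂)
    (hL : 0 < L) (C α : ℝ) (d : ℕ) :
    (r₂ ^ d * ω)⁻¹ * (C * r₁ ^ d / L ^ (2 * α)) =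
      C / ω * ((r₁ / r₂) ^ ((d : ℝ) / 2) / L ^ α) ^ 2 := by
  rw [div_pow, ← rpow_natCast (_ ^ _), ← rpow_mul (by positivity), ← rpow_natCast (_ ^ α),
    ← rpow_mul hL.le, div_rpow hr₁.le hr₂.le]
  norm_num
  field_simp

theorem campanato_average_two_radii_general
    (d : ℕ) (C α : ℝ) :
    ∃ C' > (0 : ℝ),
      ∀ (Ω : Set (EuclideanSpace ℝ (Fin d))), IsOpen Ω →
      ∀ (f : EuclideanSpace ℝ (Fin d) → ℝ), Measurable f →
        (∃ B, ∀ x ∈ Ω, |f x| ≤ B) →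
        (∀ x ∈ Ω, ∀ r : ℝ, 0 < r → r < 1 / 2 → Metric.ball x r ⊆ Ω →
          ∫ y in Metric.ball x r, (f y - ballAvg f x r) ^ 2 ≤
            C * r ^ d / |Real.logb 2 r| ^ (2 * α)) →
        ∀ x ∈ Ω, ∀ r₁ r₂ : ℝ, 0 < r₂ → r₂ < r₁ →
          r₁ < min (Metric.infDist x (frontier Ω)) (1 / 2) →
          |ballAvg f x r₁ - ballAvg f x r₂| ≤
            C' * (1 + (r₁ / r₂) ^ ((d : ℝ) / 2)) / |Real.logb 2 r₁| ^ α := by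
  set ω := volume.real (ball (0 : EuclideanSpace ℝ (Fin d)) 1)
  have hω : 0 < ω :=
    ENNReal.toReal_pos (measure_ball_pos _ _ one_pos).ne' measure_ball_lt_top.ne
  refine ⟨√(C / ω) + 1, by positivity, ?_⟩
  intro Ω hΩ f hf ⟨B, hB⟩ hCam x hx r₁ r₂ hr₂ hr₁₂ hr₁
  have hr₁_pos : 0 < r₁ := hr₂.trans hr₁₂
  have hr₁_half : r₁ < 1 / 2 := hr₁.trans_le (min_le_right _ _)
  have hball : ball x r₁ ⊆ Ω :=
    ball_subset_of_lt_infDist_frontier hΩ hx (hr₁.trans_le (min_le_left _ _))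
  have hL : 0 < |logb 2 r₁| := abs_pos.2 (logb_neg one_lt_two hr₁_pos (by linarith)).ne
  have hf2 : MemLp f 2 (volume.restrict (ball x r₁)) :=
    have := Fact.mk (measure_ball_lt_top (μ := volume) (x := x) (r := r₁))
    MemLp.of_bound hf.aestronglyMeasurable B <|
      (ae_restrict_iff' measurableSet_ball).2 (ae_of_all _ fun y hy => hB y (hball hy))
  have hosc := sq_setAverage_sub_le_of_subset (ball_subset_ball hr₁₂.le)
    (measure_ball_pos volume x hr₂).ne' measure_ball_lt_top.ne hf2 (ballAvg f x r₁)
  rw [← ballAvg_eq_setAverage, addHaar_real_ball_of_pos volume x hr₂,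
    finrank_euclideanSpace_fin] at hosc
  have hcam : ∫ y in ball x r₁, (f y - ballAvg f x r₁) ^ 2 ≤ C * r₁ ^ d / |logb 2 r₁| ^ (2 * α) :=
    hCam x hx r₁ hr₁_pos hr₁_half hball
  calc |ballAvg f x r₁ - ballAvg f x r₂| = √((ballAvg f x r₂ - ballAvg f x r₁) ^ 2) := by
        rw [sqrt_sq_eq_abs, abs_sub_comm]
    _ ≤ √((r₂ ^ d * ω)⁻¹ * (C * r₁ ^ d / |logb 2 r₁| ^ (2 * α))) :=
        sqrt_le_sqrt (hosc.trans (mul_le_mul_of_nonneg_left hcam (by positivity)))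
    _ = √(C / ω) * ((r₁ / r₂) ^ ((d : ℝ) / 2) / |logb 2 r₁| ^ α) := by
        rw [campanato_scaling_identity hω hr₁_pos hr₂ hL, sqrt_mul' _ (by positivity),
          sqrt_sq (by positivity)]
    _ ≤ (√(C / ω) + 1) * (1 + (r₁ / r₂) ^ ((d : ℝ) / 2)) / |logb 2 r₁| ^ α := by
        rw [mul_div_assoc]
        gcongr <;> linarith

theorem campanato_average_two_radii
    (d : ℕ) (C α : ℝ) (hC : 0 < C) (hα : 1 < α) :
    ∃ C' > (0 : ℝ),
      ∀ (Ω : Set (EuclideanSpace ℝ (Fin d))), IsOpen Ω →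
      ∀ (f : EuclideanSpace ℝ (Fin d) → ℝ), Measurable f →
        (∃ B, ∀ x ∈ Ω, |f x| ≤ B) →
        (∀ x ∈ Ω, ∀ r : ℝ, 0 < r → r < 1 / 2 → Metric.ball x r ⊆ Ω →
          ∫ y in Metric.ball x r, (f y - ballAvg f x r) ^ 2 ≤
            C * r ^ d / |Real.logb 2 r| ^ (2 * α)) →
        ∀ x ∈ Ω, ∀ r₁ r₂ : ℝ, 0 < r₂ → r₂ < r₁ →
          r₁ < min (Metric.infDist x (frontier Ω)) (1 / 2) →
          |ballAvg f x r₁ - ballAvg f x r₂| ≤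
            C' * (1 + (r₁ / r₂) ^ ((d : ℝ) / 2)) / |Real.logb 2 r₁| ^ α :=
  campanato_average_two_radii_general d C α
end
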